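/- arXiv:2010.13176 — 2 statements merged into one kernel-verified Lean document; each statement's English description precedes it below -/
import Mathlib

section
/- Let G be a group, let c and d be left-invariant circular orderings of G, let g ∈ G, and let n ≥ 1. If d(id, gⁱ, g^{i+1}) = c(id, gⁱ, g^{i+1}) for all i = 1, …, n, then [hⁿ]_d = [g̃ⁿ]_c, where g̃ = (g,0) ∈ G̃_c and h = (g,0) ∈ G̃_d. -/
namespace Paper

variable {G : Type*} [Group G]

/-- A left-invariant circular ordering of a group `G`, as a function `G³ → {0, ±1} ⊆ ℤ`. -/
def IsCircOrd (c : G → G → G → ℤ) : Prop :=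
  (∀ g₁ g₂ g₃ : G, c g₁ g₂ g₃ = 0 ↔ (g₁ = g₂ ∨ g₁ = g₃ ∨ g₂ = g₃)) ∧
  (∀ g₁ g₂ g₃ : G, c g₁ g₂ g₃ = 0 ∨ c g₁ g₂ g₃ = 1 ∨ c g₁ g₂ g₃ = -1) ∧
  (∀ g₁ g₂ g₃ g₄ : G, c g₂ g₃ g₄ - c g₁ g₃ g₄ + c g₁ g₂ g₄ - c g₁ g₂ g₃ = 0) ∧
  (∀ g g₁ g₂ g₃ : G, c (g*g₁) (g*g₂) (g*g₃) = c g₁ g₂ g₃)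

/-- The space CO(G) of circular orderings, topologized as a subspace of `ℤ^{G³}`
(all relevant values lie in the discrete set `{0,±1}`, and `ℤ` carries the discrete
topology, so this is the subspace topology from the product topology on `{0,±1}^{G³}`). -/
abbrev CircOrd (G : Type*) [Group G] := {c : G → G → G → ℤ // IsCircOrd c}

open Classical in
/-- The cocycle `f_c`: `f_c(g,h) = 0` if `g = 1` or `h = 1` or `c(1,g,gh) = 1`,
and `f_c(g,h) = 1` otherwise (i.e. when `gh = 1 ≠ g`, or `c(1,gh,g) = 1`). -/
noncomputable def fc (c : G → G → G → ℤ) (g h : G) : ℤ :=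
  if g = 1 ∨ h = 1 ∨ c 1 g (g*h) = 1 then 0 else 1

/-- Multiplication in the central extension `G̃_c = G × ℤ`:
`(g,n)(h,m) = (gh, n+m+f_c(g,h))`. -/
noncomputable def liftMul (c : G → G → G → ℤ) (x y : G × ℤ) : G × ℤ :=
  (x.1 * y.1, x.2 + y.2 + fc c x.1 y.1)

/-- Powers (with natural number exponents) in `G̃_c`. -/
noncomputable def liftPow (c : G → G → G → ℤ) (x : G × ℤ) : ℕ → G × ℤ
  | 0 => (1, 0)
  | n+1 => liftMul c (liftPow c x n) x

/-- `[h]_c`: the unique integer `k` with `z_c^k ≤_c h <_c z_c^{k+1}`, where `<_c` is the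
left-ordering of `G̃_c` with positive cone `{(g,n) : n ≥ 0} ∖ {(1,0)}` and `z_c = (1,1)`.
Since `z_c^k = (1,k)` and `f_c(g,g⁻¹) = 1` for `g ≠ 1`, this is exactly the second
coordinate of `h`. -/
def liftFloor (h : G × ℤ) : ℤ := h.2

/-- The translation number `r̃ot_c(h)` of `h ∈ G̃_c`: the limit of `[hⁿ]_c / n`
(`limUnder` picks out the limit when it exists). -/
noncomputable def rotTilde (c : G → G → G → ℤ) (h : G × ℤ) : ℝ :=
  Filter.limUnder Filter.atTop (fun n : ℕ => (liftFloor (liftPow c h n) : ℝ) / (n : ℝ))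

/-- The rotation number `rot_c(g) ∈ ℝ/ℤ`, computed using the lift `(g,0) ∈ G̃_c`
(it is independent of the choice of lift). -/
noncomputable def rotc (c : G → G → G → ℤ) (g : G) : AddCircle (1:ℝ) :=
  ((rotTilde c (g, 0) : ℝ) : AddCircle (1:ℝ))

/-- `τ_c(g,h) = r̃ot_c(g̃h̃) − r̃ot_c(g̃) − r̃ot_c(h̃)`, computed using the lifts `(g,0)`
and `(h,0)` (it is independent of the choice of lifts). -/
noncomputable def tauc (c : G → G → G → ℤ) (g h : G) : ℝ :=
  rotTilde c (liftMul c (g,0) (h,0)) - rotTilde c (g,0) - rotTilde c (h,0)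

/-- A positive cone of a group `G`: `P · P ⊆ P` and `P ∪ P⁻¹ = G ∖ {1}`.
It determines a left-ordering by `g < h` iff `g⁻¹h ∈ P`. -/
def IsPositiveCone (P : Set G) : Prop :=
  (∀ a ∈ P, ∀ b ∈ P, a * b ∈ P) ∧ (P ∪ P⁻¹ = {g : G | g ≠ 1})

/-- The left-ordering determined by a positive cone. -/
def coneLt (P : Set G) (a b : G) : Prop := a⁻¹ * b ∈ P

open Classical in
/-- The secret left-ordering `c_<` determined by a positive cone `P`:
`c_<(a,b,c) = sign σ` where `σ` is the permutation sorting `(a,b,c)` into increasing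
order, i.e. `c_< = 1` on positively cyclically ordered triples, `-1` on negatively
cyclically ordered triples, and `0` when the entries are not all distinct. -/
noncomputable def circOfCone (P : Set G) : G → G → G → ℤ := fun a b c =>
  if (coneLt P a b ∧ coneLt P b c) ∨ (coneLt P b c ∧ coneLt P c a) ∨
      (coneLt P c a ∧ coneLt P a b) then 1
  else if (coneLt P c b ∧ coneLt P b a) ∨ (coneLt P b a ∧ coneLt P a c) ∨
      (coneLt P a c ∧ coneLt P c b) then -1
  else 0

/-- A circular ordering is a *secret left-ordering* if it is `c_<` for some
left-ordering `<` of `G`. -/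
def IsSecret (c : G → G → G → ℤ) : Prop := ∃ P : Set G, IsPositiveCone P ∧ c = circOfCone P

theorem fc_congr {c d : G → G → G → ℤ} {a b : G} (h : d 1 a (a * b) = c 1 a (a * b)) :
    fc d a b = fc c a b := by
  unfold fc
  rw [h]

theorem fc_one_left (c : G → G → G → ℤ) (b : G) : fc c 1 b = 0 := by
  simp [fc]

theorem liftPow_fst (c : G → G → G → ℤ) (x : G × ℤ) (m : ℕ) : (liftPow c x m).1 = x.1 ^ m := by
  induction m with
  | zero => exact (pow_zero x.1).symm
  | succ k ih => simp only [liftPow, liftMul, ih, pow_succ]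

theorem liftPow_congr {c d : G → G → G → ℤ} (x : G × ℤ) (m : ℕ)
    (h : ∀ i : ℕ, 1 ≤ i → i < m → d 1 (x.1 ^ i) (x.1 ^ (i + 1)) = c 1 (x.1 ^ i) (x.1 ^ (i + 1))) :
    liftPow d x m = liftPow c x m := by
  induction m with
  | zero => rfl
  | succ k ih =>
    have hfc : fc d (x.1 ^ k) x.1 = fc c (x.1 ^ k) x.1 := by
      rcases Nat.eq_zero_or_pos k with rfl | hk
      · simp only [pow_zero, fc_one_left]
      · exact fc_congr (by simpa only [← pow_succ] using h k hk (Nat.lt_succ_self k))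
    rw [liftPow, liftPow, ih fun i hi hik => h i hi (Nat.lt_succ_of_lt hik)]
    simp only [liftMul, liftPow_fst, hfc]

theorem stmt5_general (c d : G → G → G → ℤ)
    (g : G) (n : ℕ)
    (hagree : ∀ i : ℕ, 1 ≤ i → i ≤ n → d 1 (g ^ i) (g ^ (i + 1)) = c 1 (g ^ i) (g ^ (i + 1))) :
    liftFloor (liftPow d (g, 0) n) = liftFloor (liftPow c (g, 0) n) := by
  rw [liftPow_congr (g, 0) n fun i hi hin => hagree i hi hin.le]

/-- Lemma 4.9: if the circular orderings `c` and `d` agree on the triples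
`(1, gⁱ, g^{i+1})` for `i = 1, …, n`, then `[hⁿ]_d = [g̃ⁿ]_c`, where `g̃ = (g,0) ∈ G̃_c`
and `h = (g,0) ∈ G̃_d`. -/
theorem stmt5 (c d : G → G → G → ℤ) (hc : IsCircOrd c) (hd : IsCircOrd d)
    (g : G) (n : ℕ) (hn : 1 ≤ n)
    (hagree : ∀ i : ℕ, 1 ≤ i → i ≤ n → d 1 (g ^ i) (g ^ (i + 1)) = c 1 (g ^ i) (g ^ (i + 1))) :
    liftFloor (liftPow d (g, 0) n) = liftFloor (liftPow c (g, 0) n) :=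
  stmt5_general c d g n hagree

end Paper
end

section
/- Let (H,<) be a left-ordered group with a central element z, id < z, that is cofinal, and let φ : L → H be an injective group homomorphism such that the image φ(L) is cofinal in (H,<). Let <^φ be the left-ordering of L defined by g <^φ h iff φ(g) < φ(h). Then the secret left-ordering c_{<^φ} ∈ CO(L) is an accumulation point of CO_g(L): every open neighborhood of c_{<^φ} in CO(L) contains infinitely many genuine circular orderings of L. -/
namespace Paper

variable {G : Type*} [Group G]

/-!
Put `w = z ^ n`. Each `h ∈ H` is uniquely `w ^ k * r` with `1 ≤ r < w`; order `H` by the key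
`(r, k)` lexicographically. Left multiplication by `g` moves `r` by a rotation of `H ⧸ ⟨w⟩`, so
it preserves the order of the keys of `x` and `y` unless exactly one of `g x`, `g y` wraps past
`w`. These corrections cancel in the cyclic orientation of a triple, which is therefore a
left-invariant circular ordering `c_n` of `H`, and of `L` through `φ`.

`c_n` is genuine: for `t = φ g > z`, the first power `t ^ (j + 1) ≥ w` wraps around below `t`, so
`(1, g, g ^ j)` and `(1, g, g ^ (j + 1))` have opposite orientations, which never happens for a
left-ordering. And `c_n → c_{<^φ}`: on `[z ^ (-N), z ^ N)` with `2 N ≤ n`, passing to keys only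
moves the elements below `1` above the others, which does not change orientations. Since `CO(L)`
is T1, a secret limit of genuine orderings is an accumulation point of them.
-/

open Function Filter Topology

section CircOfRel

variable {α β : Type*}

open Classical in
/-- The definition of `circOfCone` for an arbitrary relation, so that
`circOfCone P = circOfRel (coneLt P)` holds by `rfl`. -/
noncomputable def circOfRel (s : α → α → Prop) : α → α → α → ℤ := fun a b c =>
  if (s a b ∧ s b c) ∨ (s b c ∧ s c a) ∨ (s c a ∧ s a b) then 1
  else if (s c b ∧ s b a) ∨ (s b a ∧ s a c) ∨ (s a c ∧ s c b) then -1
  else 0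

variable [LinearOrder β]

def ltSign (a b : β) : ℤ := if a < b then 1 else if b < a then -1 else 0

theorem ltSign_swap (a b : β) : ltSign b a = -ltSign a b := by
  unfold ltSign; split_ifs <;> first | rfl | omega | order

theorem circOfRel_lt_eq_sum_ltSign (a b c : β) :
    circOfRel (· < ·) a b c = ltSign a b + ltSign b c + ltSign c a := by
  unfold circOfRel ltSign
  split_ifs <;> grind

theorem circOfRel_lt_eq_zero_iff {a b c : β} :
    circOfRel (· < ·) a b c = 0 ↔ a = b ∨ a = c ∨ b = c := by
  rw [circOfRel_lt_eq_sum_ltSign]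
  unfold ltSign
  split_ifs <;> grind

theorem circOfRel_lt_eq_one {a b c : β} (hab : a < b) (hbc : b < c) :
    circOfRel (· < ·) a b c = 1 := by
  rw [circOfRel_lt_eq_sum_ltSign]
  unfold ltSign
  split_ifs <;> grind

theorem circOfRel_lt_eq_neg_one {a b c : β} (hac : a < c) (hcb : c < b) :
    circOfRel (· < ·) a b c = -1 := by
  rw [circOfRel_lt_eq_sum_ltSign]
  unfold ltSign
  split_ifs <;> grind

theorem circOfRel_lt_eq_zero_or_eq_one_or_eq_neg_one (a b c : β) :
    circOfRel (· < ·) a b c = 0 ∨ circOfRel (· < ·) a b c = 1 ∨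
      circOfRel (· < ·) a b c = -1 := by
  unfold circOfRel
  split_ifs <;> simp

theorem circOfRel_lt_cocycle (a b c d : β) :
    circOfRel (· < ·) b c d - circOfRel (· < ·) a c d + circOfRel (· < ·) a b d
      - circOfRel (· < ·) a b c = 0 := by
  simp only [circOfRel_lt_eq_sum_ltSign, ltSign_swap d, ltSign_swap c a]
  ring

theorem isCircOrd_circOfRel_comp {G : Type*} [Group G] {f : G → β} (hf : Injective f)
    (hinv : ∀ g a b c, circOfRel (· < ·) (f (g * a)) (f (g * b)) (f (g * c)) =
      circOfRel (· < ·) (f a) (f b) (f c)) :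
    IsCircOrd fun a b c => circOfRel (· < ·) (f a) (f b) (f c) :=
  ⟨fun _ _ _ => by simp only [circOfRel_lt_eq_zero_iff, hf.eq_iff],
    fun _ _ _ => circOfRel_lt_eq_zero_or_eq_one_or_eq_neg_one _ _ _,
    fun _ _ _ _ => circOfRel_lt_cocycle _ _ _ _, hinv⟩

end CircOfRel

section PositiveCone

variable {G : Type*} [Group G] {P : Set G}

theorem coneLt_mul_left_iff {g a b : G} : coneLt P (g * a) (g * b) ↔ coneLt P a b := by
  simp only [coneLt, mul_inv_rev, mul_assoc, inv_mul_cancel_left]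

theorem IsPositiveCone.one_notMem (hP : IsPositiveCone P) : (1 : G) ∉ P := fun h => by
  simpa using hP.2.subset (Or.inl h)

theorem IsPositiveCone.isStrictTotalOrder (hP : IsPositiveCone P) :
    IsStrictTotalOrder G (coneLt P) where
  irrefl a h := hP.one_notMem (by simpa [coneLt] using h)
  trans a b c hab hbc := by simpa [coneLt, mul_assoc] using hP.1 _ hab _ hbc
  trichotomous a b hab hba := by
    by_contra hne
    have : a⁻¹ * b ∈ P ∪ P⁻¹ := hP.2 ▸ fun e => hne (inv_mul_eq_one.1 e)
    exact this.elim hab fun h => hba (by simpa [coneLt] using h)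

noncomputable abbrev IsPositiveCone.linearOrder (hP : IsPositiveCone P) : LinearOrder G :=
  @linearOrderOfSTO G (coneLt P) hP.isStrictTotalOrder (Classical.decRel _)

theorem IsPositiveCone.mulLeftMono (hP : IsPositiveCone P) :
    letI := hP.linearOrder; MulLeftMono G :=
  letI := hP.linearOrder
  ⟨fun g _ _ h => h.imp (congrArg (g * ·)) coneLt_mul_left_iff.2⟩

theorem IsPositiveCone.preimage {L : Type*} [Group L] (hP : IsPositiveCone P) (φ : L →* G)
    (hφ : Injective φ) : IsPositiveCone (φ ⁻¹' P) := by
  refine ⟨fun a ha b hb => by simpa using hP.1 _ ha _ hb, Set.ext fun a => ?_⟩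
  have := Set.ext_iff.1 hP.2 (φ a)
  simp_all [map_eq_one_iff φ hφ]

theorem circOfCone_preimage {L : Type*} [Group L] (φ : L →* G) (a b c : L) :
    circOfCone (φ ⁻¹' P) a b c = circOfCone P (φ a) (φ b) (φ c) := by
  classical
  simp only [circOfCone, coneLt, Set.mem_preimage, map_mul, map_inv]
  congr

end PositiveCone

section LeftOrderedGroup

variable {H : Type*} [Group H] [LinearOrder H]

def IsCofinalElement (w : H) : Prop := ∀ h : H, ∃ m k : ℤ, w ^ m < h ∧ h < w ^ k

variable [MulLeftMono H]

theorem zpow_right_strictMono' {a : H} (ha : 1 < a) : StrictMono fun n : ℤ => a ^ n :=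
  strictMono_int_of_lt_succ fun n => by
    simpa [zpow_add_one] using lt_mul_of_one_lt_right' (a ^ n) ha

theorem pow_le_pow_left_of_mem_center {a b : H} (ha : a ∈ Subgroup.center H) (hab : a ≤ b) :
    ∀ n : ℕ, a ^ n ≤ b ^ n
  | 0 => by simp
  | n + 1 => calc
      a ^ (n + 1) = a * a ^ n := pow_succ' a n
      _ ≤ a * b ^ n := mul_le_mul_right (pow_le_pow_left_of_mem_center ha hab n) a
      _ = b ^ n * a := (Subgroup.mem_center_iff.1 ha _).symm
      _ ≤ b ^ n * b := mul_le_mul_right hab _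
      _ = b ^ (n + 1) := (pow_succ b n).symm

theorem circOfRel_one_pow {x : H} {j : ℕ} (hj : 2 ≤ j) :
    circOfRel (· < ·) 1 x (x ^ j) = ltSign 1 x := by
  rcases lt_trichotomy 1 x with hx | rfl | hx
  · rw [circOfRel_lt_eq_one hx (by simpa using pow_lt_pow_right' hx (by omega : 1 < j))]
    simp [ltSign, hx]
  · simp [circOfRel_lt_eq_sum_ltSign, ltSign]
  · have hxj : x ^ j < x := by
      obtain ⟨i, rfl⟩ := Nat.exists_eq_add_of_le' hj
      simpa [pow_succ'] using mul_lt_mul_right (pow_lt_one' hx (by omega : i + 1 ≠ 0)) x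
    simp [circOfRel_lt_eq_sum_ltSign, ltSign, hx, hxj, hxj.trans hx, hx.not_gt, hxj.not_gt]

theorem le_mul_of_mul_self_le_of_inv_le {w r y : H} (hwc : w ∈ Subgroup.center H)
    (hrw : r * r ≤ w) (hy : r⁻¹ ≤ y) : r ≤ w * y := calc
  r = r⁻¹ * (r * r) := by group
  _ ≤ r⁻¹ * w := mul_le_mul_right hrw _
  _ = w * r⁻¹ := Subgroup.mem_center_iff.1 hwc _
  _ ≤ w * y := mul_le_mul_right hy _

theorem exists_pow_lt_le_pow_succ {t w : H} (ht1 : 1 < t) (ht2 : t ^ 2 < w)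
    (htw : ∃ m : ℕ, w ≤ t ^ m) : ∃ j ≥ 2, t ^ j < w ∧ w ≤ t ^ (j + 1) := by
  classical
  obtain ⟨j, hj⟩ : ∃ j, Nat.find htw = j + 1 := Nat.exists_eq_succ_of_ne_zero fun h => by
    simpa [h] using (Nat.find_spec htw).trans_lt' (one_lt_pow' ht1 two_ne_zero |>.trans ht2)
  have hwj1 : w ≤ t ^ (j + 1) := hj ▸ Nat.find_spec htw
  refine ⟨j, ?_, not_le.1 (Nat.find_min htw (by omega)), hwj1⟩
  by_contra! h
  exact (hwj1.trans (pow_le_pow_right' ht1.le (by omega : j + 1 ≤ 2))).not_gt ht2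

theorem IsCofinalElement.pow {z : H} (hz1 : 1 < z) (hzcof : IsCofinalElement z) {n : ℕ}
    (hn : n ≠ 0) : IsCofinalElement (z ^ n) := by
  intro h
  obtain ⟨m, k, hm, hk⟩ := hzcof h
  have hmono := (zpow_right_strictMono' hz1).monotone
  refine ⟨-|m|, |k|, lt_of_le_of_lt ?_ hm, hk.trans_le ?_⟩ <;>
    rw [← zpow_natCast, ← zpow_mul] <;> apply hmono
  · nlinarith [abs_nonneg m, neg_abs_le m, (Nat.one_le_iff_ne_zero.2 hn : 1 ≤ n)]
  · nlinarith [abs_nonneg k, le_abs_self k, (Nat.one_le_iff_ne_zero.2 hn : 1 ≤ n)]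

theorem IsCofinalElement.eventually_mem_Ico {z : H} (hz1 : 1 < z) (hzcof : IsCofinalElement z)
    (x : H) : ∀ᶠ N : ℕ in atTop, x ∈ Set.Ico (z ^ N)⁻¹ (z ^ N) := by
  obtain ⟨m, k, hm, hk⟩ := hzcof x
  have hmono := (zpow_right_strictMono' hz1).monotone
  refine eventually_atTop.2 ⟨m.natAbs + k.natAbs, fun N hN => ⟨?_, ?_⟩⟩
  · rw [← zpow_natCast, ← zpow_neg]
    exact (hmono (by omega)).trans hm.le
  · rw [← zpow_natCast]
    exact hk.trans_le (hmono (by omega))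

end LeftOrderedGroup

section ZPowFloor

variable {H : Type*} [Group H] [LinearOrder H] {w : H}

noncomputable def zpowFloor (w h : H) : ℤ := sSup {k : ℤ | w ^ k ≤ h}

noncomputable def zpowFract (w h : H) : H := w ^ (-zpowFloor w h) * h

noncomputable def zpowCarry (w g x : H) : ℤ :=
  if w ≤ zpowFract w g * zpowFract w x then 1 else 0

theorem zpow_zpowFloor_mul_zpowFract (w h : H) : w ^ zpowFloor w h * zpowFract w h = h := by
  simp [zpowFract]

theorem mul_eq_zpow_mul_zpowFract_mul (hwc : w ∈ Subgroup.center H) (g x : H) :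
    g * x = w ^ (zpowFloor w g + zpowFloor w x + zpowCarry w g x) *
      (w ^ (-zpowCarry w g x) * (zpowFract w g * zpowFract w x)) := by
  have hc := Subgroup.mem_center_iff.1 (Subgroup.zpow_mem _ hwc (zpowFloor w x)) (zpowFract w g)
  conv_lhs => rw [← zpow_zpowFloor_mul_zpowFract w g, ← zpow_zpowFloor_mul_zpowFract w x]
  rw [mul_assoc, ← mul_assoc (zpowFract w g), hc]
  group

variable [MulLeftMono H]

theorem zpowFloor_spec (hw1 : 1 < w) (hwcof : IsCofinalElement w) (h : H) :
    w ^ zpowFloor w h ≤ h ∧ h < w ^ (zpowFloor w h + 1) := by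
  obtain ⟨m, k, hm, hk⟩ := hwcof h
  have hmono := zpow_right_strictMono' hw1
  have hbdd : BddAbove {j : ℤ | w ^ j ≤ h} :=
    ⟨k, fun j hj => (hmono.lt_iff_lt.1 (lt_of_le_of_lt hj hk)).le⟩
  have hne : {j : ℤ | w ^ j ≤ h}.Nonempty := ⟨m, hm.le⟩
  exact ⟨Int.csSup_mem hne hbdd,
    lt_of_not_ge fun hle => (lt_add_one (zpowFloor w h)).not_ge (le_csSup hbdd hle)⟩

theorem zpowFloor_eq (hw1 : 1 < w) (hwcof : IsCofinalElement w) {h : H} {k : ℤ}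
    (hk : w ^ k ≤ h) (hk' : h < w ^ (k + 1)) : zpowFloor w h = k := by
  have hmono := zpow_right_strictMono' hw1
  have h1 := hmono.lt_iff_lt.1 (lt_of_le_of_lt hk (zpowFloor_spec hw1 hwcof h).2)
  have h2 := hmono.lt_iff_lt.1 (lt_of_le_of_lt (zpowFloor_spec hw1 hwcof h).1 hk')
  omega

theorem one_le_zpowFract (hw1 : 1 < w) (hwcof : IsCofinalElement w) (h : H) :
    1 ≤ zpowFract w h := by
  rw [zpowFract, zpow_neg, le_inv_mul_iff_mul_le, mul_one]
  exact (zpowFloor_spec hw1 hwcof h).1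

theorem zpowFract_lt (hw1 : 1 < w) (hwcof : IsCofinalElement w) (h : H) : zpowFract w h < w := by
  rw [zpowFract, zpow_neg, inv_mul_lt_iff_lt_mul, ← zpow_add_one]
  exact (zpowFloor_spec hw1 hwcof h).2

theorem zpowFloor_zpow_mul (hw1 : 1 < w) (hwcof : IsCofinalElement w) (k : ℤ) {r : H}
    (hr1 : 1 ≤ r) (hrw : r < w) : zpowFloor w (w ^ k * r) = k :=
  zpowFloor_eq hw1 hwcof (le_mul_of_one_le_right' hr1)
    (by rw [zpow_add_one]; exact mul_lt_mul_right hrw _)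

theorem zpowFract_zpow_mul (hw1 : 1 < w) (hwcof : IsCofinalElement w) (k : ℤ) {r : H}
    (hr1 : 1 ≤ r) (hrw : r < w) : zpowFract w (w ^ k * r) = r := by
  simp [zpowFract, zpowFloor_zpow_mul hw1 hwcof k hr1 hrw]

theorem zpow_neg_zpowCarry_mul_mem_Ico (hw1 : 1 < w) (hwcof : IsCofinalElement w)
    (hwc : w ∈ Subgroup.center H) (g x : H) :
    w ^ (-zpowCarry w g x) * (zpowFract w g * zpowFract w x) ∈ Set.Ico 1 w := by
  unfold zpowCarry
  split_ifs with hc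
  · refine ⟨by simpa [le_inv_mul_iff_mul_le] using hc, ?_⟩
    rw [zpow_neg_one, inv_mul_lt_iff_lt_mul]
    calc zpowFract w g * zpowFract w x < zpowFract w g * w :=
          mul_lt_mul_right (zpowFract_lt hw1 hwcof x) _
      _ = w * zpowFract w g := Subgroup.mem_center_iff.1 hwc _
      _ < w * w := mul_lt_mul_right (zpowFract_lt hw1 hwcof g) _
  · have h := one_le_mul (one_le_zpowFract hw1 hwcof g) (one_le_zpowFract hw1 hwcof x)
    simpa using ⟨h, not_le.1 hc⟩

end ZPowFloor

section TwistKey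

variable {H : Type*} [Group H] [LinearOrder H] {w : H}

noncomputable def twistKey (w h : H) : Lex (H × ℤ) := toLex (zpowFract w h, zpowFloor w h)

theorem twistKey_injective (w : H) : Injective (twistKey w) := fun x y hxy => by
  simp only [twistKey, toLex_inj, Prod.mk.injEq] at hxy
  rw [← zpow_zpowFloor_mul_zpowFract w x, ← zpow_zpowFloor_mul_zpowFract w y, hxy.1, hxy.2]

variable [MulLeftMono H]

theorem twistKey_zpow_mul (hw1 : 1 < w) (hwcof : IsCofinalElement w) (k : ℤ) {r : H}
    (hr1 : 1 ≤ r) (hrw : r < w) : twistKey w (w ^ k * r) = toLex (r, k) := by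
  rw [twistKey, zpowFract_zpow_mul hw1 hwcof k hr1 hrw, zpowFloor_zpow_mul hw1 hwcof k hr1 hrw]

theorem twistKey_of_one_le_of_lt (hw1 : 1 < w) (hwcof : IsCofinalElement w) {x : H}
    (hx1 : 1 ≤ x) (hxw : x < w) : twistKey w x = toLex (x, 0) := by
  simpa using twistKey_zpow_mul hw1 hwcof 0 hx1 hxw

theorem twistKey_of_le_of_lt_mul (hw1 : 1 < w) (hwcof : IsCofinalElement w) {x : H}
    (hwx : w ≤ x) (hxw : x < w * w) : twistKey w x = toLex (w⁻¹ * x, 1) := by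
  have h1 : 1 ≤ w⁻¹ * x := by rwa [le_inv_mul_iff_mul_le, mul_one]
  have h2 : w⁻¹ * x < w := by rwa [inv_mul_lt_iff_lt_mul]
  simpa using twistKey_zpow_mul hw1 hwcof 1 h1 h2

theorem twistKey_mul (hw1 : 1 < w) (hwcof : IsCofinalElement w) (hwc : w ∈ Subgroup.center H)
    (g x : H) : twistKey w (g * x) = toLex (w ^ (-zpowCarry w g x) * zpowFract w g * zpowFract w x,
      zpowFloor w x + (zpowFloor w g + zpowCarry w g x)) := by
  obtain ⟨h1, h2⟩ := zpow_neg_zpowCarry_mul_mem_Ico hw1 hwcof hwc g x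
  rw [twistKey, mul_eq_zpow_mul_zpowFract_mul hwc g x, zpowFract_zpow_mul hw1 hwcof _ h1 h2,
    zpowFloor_zpow_mul hw1 hwcof _ h1 h2, mul_assoc]
  congr 2
  ring

theorem ltSign_toLex_mul_add (a u v : H) (d m n : ℤ) :
    ltSign (toLex (a * u, m + d)) (toLex (a * v, n + d)) =
      ltSign (toLex (u, m)) (toLex (v, n)) := by
  simp only [ltSign, Prod.Lex.toLex_lt_toLex, mul_lt_mul_iff_left, mul_right_inj,
    add_lt_add_iff_right]

theorem twistKey_lt_and_twistKey_mul_lt (hw1 : 1 < w) (hwcof : IsCofinalElement w)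
    (hwc : w ∈ Subgroup.center H) {g x y : H} (hx : zpowFract w g * zpowFract w x < w)
    (hy : w ≤ zpowFract w g * zpowFract w y) :
    twistKey w x < twistKey w y ∧ twistKey w (g * y) < twistKey w (g * x) := by
  have hxy : zpowFract w x < zpowFract w y := (mul_lt_mul_iff_left _).1 (hx.trans_le hy)
  refine ⟨Prod.Lex.toLex_lt_toLex.2 (Or.inl hxy), ?_⟩
  rw [twistKey_mul hw1 hwcof hwc, twistKey_mul hw1 hwcof hwc]
  refine Prod.Lex.toLex_lt_toLex.2 (Or.inl ?_)
  simp only [zpowCarry, if_pos hy, if_neg hx.not_ge, neg_zero, zpow_zero, one_mul, zpow_neg_one,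
    mul_assoc, inv_mul_lt_iff_lt_mul]
  calc zpowFract w g * zpowFract w y < zpowFract w g * (w * zpowFract w x) :=
        mul_lt_mul_right ((zpowFract_lt hw1 hwcof y).trans_le
          (le_mul_of_one_le_right' (one_le_zpowFract hw1 hwcof x))) _
    _ = w * (zpowFract w g * zpowFract w x) := by
        rw [← mul_assoc, ← mul_assoc, (Subgroup.mem_center_iff.1 hwc _)]

theorem ltSign_twistKey_mul (hw1 : 1 < w) (hwcof : IsCofinalElement w)
    (hwc : w ∈ Subgroup.center H) (g x y : H) :
    ltSign (twistKey w (g * x)) (twistKey w (g * y)) =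
      ltSign (twistKey w x) (twistKey w y) - 2 * (zpowCarry w g y - zpowCarry w g x) := by
  by_cases hx : w ≤ zpowFract w g * zpowFract w x <;>
    by_cases hy : w ≤ zpowFract w g * zpowFract w y
  · rw [twistKey_mul hw1 hwcof hwc, twistKey_mul hw1 hwcof hwc]
    simp only [zpowCarry, if_pos hx, if_pos hy, ltSign_toLex_mul_add]
    simp [twistKey]
  · obtain ⟨h1, h2⟩ := twistKey_lt_and_twistKey_mul_lt hw1 hwcof hwc (not_le.1 hy) hx
    simp [ltSign, h1, h2, h1.not_gt, zpowCarry, hx, hy]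
  · obtain ⟨h1, h2⟩ := twistKey_lt_and_twistKey_mul_lt hw1 hwcof hwc (not_le.1 hx) hy
    simp [ltSign, h1, h2, h2.not_gt, zpowCarry, hx, hy]
  · rw [twistKey_mul hw1 hwcof hwc, twistKey_mul hw1 hwcof hwc]
    simp only [zpowCarry, if_neg hx, if_neg hy, ltSign_toLex_mul_add]
    simp [twistKey]

theorem circOfRel_twistKey_mul (hw1 : 1 < w) (hwcof : IsCofinalElement w)
    (hwc : w ∈ Subgroup.center H) (g x y u : H) :
    circOfRel (· < ·) (twistKey w (g * x)) (twistKey w (g * y)) (twistKey w (g * u)) =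
      circOfRel (· < ·) (twistKey w x) (twistKey w y) (twistKey w u) := by
  simp only [circOfRel_lt_eq_sum_ltSign, ltSign_twistKey_mul hw1 hwcof hwc]
  ring

theorem twistKey_of_mem_Ico (hw1 : 1 < w) (hwcof : IsCofinalElement w)
    (hwc : w ∈ Subgroup.center H) {r x : H} (hr1 : 1 ≤ r) (hrw : r * r ≤ w)
    (hx : x ∈ Set.Ico r⁻¹ r) :
    twistKey w x = if 1 ≤ x then toLex (x, 0) else toLex (w * x, -1) := by
  split_ifs with hx1
  · exact twistKey_of_one_le_of_lt hw1 hwcof hx1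
      (hx.2.trans_le ((le_mul_of_one_le_right' hr1).trans hrw))
  · have h1 : 1 ≤ w * x := hr1.trans (le_mul_of_mul_self_le_of_inv_le hwc hrw hx.1)
    have h2 : w * x < w := by simpa using mul_lt_mul_right (not_le.1 hx1) w
    simpa [← mul_assoc] using twistKey_zpow_mul hw1 hwcof (-1) h1 h2

theorem ltSign_twistKey_of_mem_Ico (hw1 : 1 < w) (hwcof : IsCofinalElement w)
    (hwc : w ∈ Subgroup.center H) {r x y : H} (hr1 : 1 ≤ r) (hrw : r * r ≤ w)
    (hx : x ∈ Set.Ico r⁻¹ r) (hy : y ∈ Set.Ico r⁻¹ r) :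
    ltSign (twistKey w x) (twistKey w y) =
      ltSign x y - 2 * ((if 1 ≤ y then 1 else 0) - (if 1 ≤ x then 1 else 0)) := by
  rw [twistKey_of_mem_Ico hw1 hwcof hwc hr1 hrw hx, twistKey_of_mem_Ico hw1 hwcof hwc hr1 hrw hy]
  by_cases hx1 : 1 ≤ x <;> by_cases hy1 : 1 ≤ y
  · simp [hx1, hy1, ltSign, Prod.Lex.toLex_lt_toLex]
  · have hyx : y < x := (not_le.1 hy1).trans_le hx1
    have hxy : x < w * y := hx.2.trans_le (le_mul_of_mul_self_le_of_inv_le hwc hrw hy.1)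
    simp [hx1, hy1, ltSign, Prod.Lex.toLex_lt_toLex, hyx, hxy, hyx.not_gt]
  · have hxy : x < y := (not_le.1 hx1).trans_le hy1
    have hyx : y < w * x := hy.2.trans_le (le_mul_of_mul_self_le_of_inv_le hwc hrw hx.1)
    simp [hx1, hy1, ltSign, Prod.Lex.toLex_lt_toLex, hyx, hxy, hyx.not_gt, hyx.ne']
  · simp [hx1, hy1, ltSign, Prod.Lex.toLex_lt_toLex]

theorem circOfRel_twistKey_of_mem_Ico (hw1 : 1 < w) (hwcof : IsCofinalElement w)
    (hwc : w ∈ Subgroup.center H) {r x y u : H} (hr1 : 1 ≤ r) (hrw : r * r ≤ w)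
    (hx : x ∈ Set.Ico r⁻¹ r) (hy : y ∈ Set.Ico r⁻¹ r) (hu : u ∈ Set.Ico r⁻¹ r) :
    circOfRel (· < ·) (twistKey w x) (twistKey w y) (twistKey w u) =
      circOfRel (· < ·) x y u := by
  simp only [circOfRel_lt_eq_sum_ltSign, ltSign_twistKey_of_mem_Ico hw1 hwcof hwc hr1 hrw, *]
  ring

theorem exists_circOfRel_twistKey_pow (hw1 : 1 < w) (hwcof : IsCofinalElement w)
    (hwc : w ∈ Subgroup.center H) {t : H} (ht1 : 1 < t) (ht2 : t ^ 2 < w)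
    (htw : ∃ m : ℕ, w ≤ t ^ m) : ∃ j ≥ 2,
      circOfRel (· < ·) (twistKey w 1) (twistKey w t) (twistKey w (t ^ j)) = 1 ∧
      circOfRel (· < ·) (twistKey w 1) (twistKey w t) (twistKey w (t ^ (j + 1))) = -1 := by
  obtain ⟨j, hj2, hwj, hwj1⟩ := exists_pow_lt_le_pow_succ ht1 ht2 htw
  have htj : t < t ^ j := by simpa using pow_lt_pow_right' ht1 (by omega : 1 < j)
  have htw' : t < w := htj.trans hwj
  have hlt : t ^ (j + 1) < w * t := by
    rw [pow_succ', ← Subgroup.mem_center_iff.1 hwc t]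
    exact mul_lt_mul_right hwj t
  have key1 : twistKey w 1 = toLex (1, 0) := twistKey_of_one_le_of_lt hw1 hwcof le_rfl hw1
  have keyt : twistKey w t = toLex (t, 0) := twistKey_of_one_le_of_lt hw1 hwcof ht1.le htw'
  have keyj : twistKey w (t ^ j) = toLex (t ^ j, 0) :=
    twistKey_of_one_le_of_lt hw1 hwcof (one_le_pow_of_one_le' ht1.le j) hwj
  have keyj1 : twistKey w (t ^ (j + 1)) = toLex (w⁻¹ * t ^ (j + 1), 1) :=
    twistKey_of_le_of_lt_mul hw1 hwcof hwj1 (hlt.trans (mul_lt_mul_right htw' w))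
  refine ⟨j, hj2, ?_, ?_⟩
  · rw [key1, keyt, keyj]
    exact circOfRel_lt_eq_one (Prod.Lex.toLex_lt_toLex.2 (Or.inl ht1))
      (Prod.Lex.toLex_lt_toLex.2 (Or.inl htj))
  · rw [key1, keyt, keyj1]
    refine circOfRel_lt_eq_neg_one (Prod.Lex.toLex_lt_toLex'.2 ⟨?_, fun _ => zero_lt_one⟩)
      (Prod.Lex.toLex_lt_toLex.2 (Or.inl ?_))
    · rwa [le_inv_mul_iff_mul_le, mul_one]
    · rwa [inv_mul_lt_iff_lt_mul]

end TwistKey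

section TwistedCircularOrdering

variable {H : Type*} [Group H] [LinearOrder H] [MulLeftMono H] {L : Type*} [Group L] {w : H}

noncomputable def twistCirc (w : H) (φ : L →* H) (a b c : L) : ℤ :=
  circOfRel (· < ·) (twistKey w (φ a)) (twistKey w (φ b)) (twistKey w (φ c))

theorem isCircOrd_twistCirc (hw1 : 1 < w) (hwcof : IsCofinalElement w)
    (hwc : w ∈ Subgroup.center H) {φ : L →* H} (hφ : Injective φ) :
    IsCircOrd (twistCirc w φ) :=
  isCircOrd_circOfRel_comp ((twistKey_injective w).comp hφ) fun g a b c => by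
    simp only [map_mul, circOfRel_twistKey_mul hw1 hwcof hwc]

theorem twistCirc_not_isSecret (hw1 : 1 < w) (hwcof : IsCofinalElement w)
    (hwc : w ∈ Subgroup.center H) {φ : L →* H} {g : L} (hg1 : 1 < φ g) (hg2 : φ g ^ 2 < w)
    (hgw : ∃ m : ℕ, w ≤ φ g ^ m) : ¬ IsSecret (twistCirc w φ) := by
  rintro ⟨Q, hQ, hcirc⟩
  obtain ⟨j, hj, h1, h2⟩ := exists_circOfRel_twistKey_pow hw1 hwcof hwc hg1 hg2 hgw
  let _ := hQ.linearOrder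
  have _ := hQ.mulLeftMono
  have hpow : ∀ i, twistCirc w φ 1 g (g ^ i) =
      circOfRel (· < ·) (twistKey w 1) (twistKey w (φ g)) (twistKey w (φ g ^ i)) := by
    simp [twistCirc]
  have e1 : circOfCone Q 1 g (g ^ j) = 1 := by rw [← hcirc, hpow, h1]
  have e2 : circOfCone Q 1 g (g ^ (j + 1)) = -1 := by rw [← hcirc, hpow, h2]
  -- `circOfCone Q` is `circOfRel (· < ·)` for `hQ.linearOrder` by definition.
  have h := (circOfRel_one_pow (x := g) hj).trans
    (circOfRel_one_pow (x := g) (j := j + 1) (by omega)).symm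
  exact absurd (e1.symm.trans (h.trans e2)) (by norm_num)

theorem eventually_twistCirc_pow_eq {z : H} (hz1 : 1 < z) (hzcof : IsCofinalElement z)
    (hzc : z ∈ Subgroup.center H) (φ : L →* H) (a b c : L) :
    ∀ᶠ n : ℕ in atTop,
      twistCirc (z ^ (n + 1)) φ a b c = circOfRel (· < ·) (φ a) (φ b) (φ c) := by
  obtain ⟨N, ha, hb, hc⟩ := ((hzcof.eventually_mem_Ico hz1 (φ a)).and
    ((hzcof.eventually_mem_Ico hz1 (φ b)).and (hzcof.eventually_mem_Ico hz1 (φ c)))).exists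
  refine eventually_atTop.2 ⟨2 * N, fun n hn => ?_⟩
  refine circOfRel_twistKey_of_mem_Ico (one_lt_pow' hz1 n.succ_ne_zero)
    (hzcof.pow hz1 n.succ_ne_zero) (Subgroup.pow_mem _ hzc _) (one_le_pow_of_one_le' hz1.le N) ?_
    ha hb hc
  rw [← pow_add]
  exact pow_le_pow_right' hz1.le (by omega)

theorem eventually_twistCirc_pow_not_isSecret {z : H} (hz1 : 1 < z) (hzcof : IsCofinalElement z)
    (hzc : z ∈ Subgroup.center H) {φ : L →* H} {g : L} (hg : z < φ g) :
    ∀ᶠ n : ℕ in atTop, ¬ IsSecret (twistCirc (z ^ (n + 1)) φ) := by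
  obtain ⟨N, -, hN⟩ := (hzcof.eventually_mem_Ico hz1 (φ g ^ 2)).exists
  refine eventually_atTop.2 ⟨N, fun n hn => ?_⟩
  exact twistCirc_not_isSecret (one_lt_pow' hz1 n.succ_ne_zero) (hzcof.pow hz1 n.succ_ne_zero)
    (Subgroup.pow_mem _ hzc _) (hz1.trans hg)
    (hN.trans_le (pow_le_pow_right' hz1.le (by omega)))
    ⟨n + 1, pow_le_pow_left_of_mem_center hzc hg.le _⟩

end TwistedCircularOrdering

theorem tendsto_circOrd_of_eventually_eq {G ι : Type*} [Group G] {l : Filter ι}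
    {u : ι → CircOrd G} {c : CircOrd G}
    (h : ∀ a b d, ∀ᶠ i in l, (u i).1 a b d = c.1 a b d) :
    Tendsto u l (𝓝 c) := by
  rw [tendsto_subtype_rng]
  refine tendsto_pi_nhds.2 fun a => tendsto_pi_nhds.2 fun b => tendsto_pi_nhds.2 fun d => ?_
  rw [nhds_discrete, tendsto_pure]
  exact h a b d

theorem infinite_inter_of_tendsto {X ι : Type*} [TopologicalSpace X] [T1Space X] {l : Filter ι}
    [l.NeBot] {u : ι → X} {x : X} {S U : Set X} (hu : Tendsto u l (𝓝 x))
    (huS : ∀ᶠ i in l, u i ∈ S) (hx : x ∉ S) (hU : U ∈ 𝓝 x) : (U ∩ S).Infinite := by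
  intro hfin
  obtain ⟨i, hiU, hiS⟩ := ((hu.eventually_mem
    (sdiff_mem hU (hfin.isClosed.compl_mem_nhds fun h => hx h.2))).and huS).exists
  exact hiU.2 ⟨hiU.1, hiS⟩

/-- Theorem 6.2: let `(H,<)` be a left-ordered group (ordering given by the cone `P`)
with a positive cofinal central element `z`, and let `φ : L → H` be an injective
homomorphism with cofinal image.  Then the secret left-ordering `c_{<^φ}` of `L`
(associated to the pulled-back cone `φ⁻¹(P)`) is an accumulation point of `CO_g(L)`:
every open neighbourhood of it contains infinitely many genuine circular orderings. -/
theorem stmt16 {H : Type*} [Group H] {L : Type*} [Group L]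
    (P : Set H) (hP : IsPositiveCone P) (z : H)
    (hzcentral : ∀ h : H, z * h = h * z) (hzpos : z ∈ P)
    (hzcofinal : ∀ h : H, ∃ m k : ℤ, coneLt P (z ^ m) h ∧ coneLt P h (z ^ k))
    (φ : L →* H) (hinj : Function.Injective φ)
    (himgcofinal : ∀ h : H, ∃ a b : L, coneLt P (φ a) h ∧ coneLt P h (φ b)) :
    ∀ csec : CircOrd L, csec.1 = circOfCone (φ ⁻¹' P) →
      ∀ U : Set (CircOrd L), IsOpen U → csec ∈ U →
        {d : CircOrd L | d ∈ U ∧ ¬ IsSecret d.1}.Infinite := by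
  intro csec hcsec U hU hcU
  let _ := hP.linearOrder
  have _ := hP.mulLeftMono
  have hz1 : (1 : H) < z := show coneLt P 1 z by simpa [coneLt] using hzpos
  have hzc : z ∈ Subgroup.center H := Subgroup.mem_center_iff.2 fun h => (hzcentral h).symm
  have hzcof : IsCofinalElement z := hzcofinal
  obtain ⟨-, g, -, hg⟩ := himgcofinal z
  let seq (n : ℕ) : CircOrd L := ⟨twistCirc (z ^ (n + 1)) φ,
    isCircOrd_twistCirc (one_lt_pow' hz1 n.succ_ne_zero) (hzcof.pow hz1 n.succ_ne_zero)
      (Subgroup.pow_mem _ hzc _) hinj⟩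
  refine infinite_inter_of_tendsto (u := seq) (tendsto_circOrd_of_eventually_eq fun a b c => ?_)
    (eventually_twistCirc_pow_not_isSecret hz1 hzcof hzc hg)
    (fun h => h ⟨_, hP.preimage φ hinj, hcsec⟩) (hU.mem_nhds hcU)
  filter_upwards [eventually_twistCirc_pow_eq hz1 hzcof hzc φ a b c] with n hn
  rw [hcsec, circOfCone_preimage]
  exact hn

end Paper
end
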